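/- arXiv:1510.04777 — 3 statements merged into one kernel-verified Lean document; each statement's English description precedes it below -/
import Mathlib

section
/- Let C be a finite poset with a maximal element m, and let C' = C \ {m}. Then the commutative square of full subposet inclusions with vertices ∂(C_{/m}) (the elements strictly below m), C_{/m} (the elements ≤ m), C', and C is a pushout square in the category of small categories. -/
open CategoryTheory CategoryTheory.Limits

/-- The inclusion `{x | x < m} → {x | x ≤ m}` as a functor. -/
def ltToLe {C : Type} [PartialOrder C] (m : C) : {x : C // x < m} ⥤ {x : C // x ≤ m} :=
  Monotone.functor (f := fun x : {x : C // x < m} => (⟨x.1, x.2.le⟩ : {x : C // x ≤ m}))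
    (fun _ _ h => h)

/-- The inclusion `{x | x < m} → {x | x ≠ m}` as a functor. -/
def ltToNe {C : Type} [PartialOrder C] (m : C) : {x : C // x < m} ⥤ {x : C // x ≠ m} :=
  Monotone.functor (f := fun x : {x : C // x < m} => (⟨x.1, x.2.ne⟩ : {x : C // x ≠ m}))
    (fun _ _ h => h)

/-- The inclusion `{x | x ≤ m} → C` as a functor. -/
def leToAll {C : Type} [PartialOrder C] (m : C) : {x : C // x ≤ m} ⥤ C :=
  (Subtype.mono_coe _).functor

/-- The inclusion `{x | x ≠ m} → C` as a functor. -/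
def neToAll {C : Type} [PartialOrder C] (m : C) : {x : C // x ≠ m} ⥤ C :=
  (Subtype.mono_coe _).functor

/-!
Since `m` is maximal, every chain `x ≤ y ≤ z` in `C` lies entirely in `{x | x ≤ m}` (if `z = m`)
or entirely in `{x | x ≠ m}` (if `z ≠ m`). So a pair of functors on the two pieces agreeing on
`{x | x < m}` glues to a functor on `C`: functoriality on `C` is checked on each chain inside
the piece containing it, and a functor on `C` is determined by its restrictions to the pieces.
-/

namespace PosetMaximalPushout

variable {C : Type} [PartialOrder C] {m : C} {D : Type*} [Category D]

lemma ne_of_le_of_ne (hm : ∀ c : C, m ≤ c → c = m) {x y : C} (hxy : x ≤ y) (hy : y ≠ m) :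
    x ≠ m := by
  rintro rfl
  exact hy (hm y hxy)

theorem functor_ext (hm : ∀ c : C, m ≤ c → c = m) {K L : C ⥤ D}
    (hle : leToAll m ⋙ K = leToAll m ⋙ L) (hne : neToAll m ⋙ K = neToAll m ⋙ L) : K = L := by
  refine CategoryTheory.Functor.ext (fun x => ?_) (fun x y f => ?_)
  · by_cases hx : x = m
    · exact Functor.congr_obj hle ⟨x, hx.le⟩
    · exact Functor.congr_obj hne ⟨x, hx⟩
  · by_cases hy : y = m
    · exact Functor.congr_hom hle (X := ⟨x, (leOfHom f).trans hy.le⟩) (Y := ⟨y, hy.le⟩) f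
    · exact Functor.congr_hom hne (X := ⟨x, ne_of_le_of_ne hm (leOfHom f) hy⟩) (Y := ⟨y, hy⟩) f

variable (F : {x : C // x ≤ m} ⥤ D) (G : {x : C // x ≠ m} ⥤ D)
  (hFG : ltToLe m ⋙ F = ltToNe m ⋙ G) (hm : ∀ c : C, m ≤ c → c = m)

noncomputable def descObj (x : C) : D :=
  letI := Classical.dec (x = m)
  if hx : x = m then F.obj ⟨x, hx.le⟩ else G.obj ⟨x, hx⟩

include hFG in
lemma descObj_of_le {x : C} (hx : x ≤ m) : descObj F G x = F.obj ⟨x, hx⟩ := by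
  unfold descObj
  split_ifs with h
  · rfl
  · exact (Functor.congr_obj hFG ⟨x, lt_of_le_of_ne hx h⟩).symm

lemma descObj_of_ne {x : C} (hx : x ≠ m) : descObj F G x = G.obj ⟨x, hx⟩ :=
  dif_neg hx

noncomputable def descMap {x y : C} (f : x ⟶ y) : descObj F G x ⟶ descObj F G y :=
  letI := Classical.dec (y = m)
  if hy : y = m then
    eqToHom (descObj_of_le F G hFG ((leOfHom f).trans hy.le)) ≫
      F.map (homOfLE (leOfHom f)) ≫ eqToHom (descObj_of_le F G hFG hy.le).symm
  else
    eqToHom (descObj_of_ne F G (ne_of_le_of_ne hm (leOfHom f) hy)) ≫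
      G.map (homOfLE (leOfHom f)) ≫ eqToHom (descObj_of_ne F G hy).symm

lemma descMap_of_ne {x y : C} (f : x ⟶ y) (hy : y ≠ m) :
    descMap F G hFG hm f =
      eqToHom (descObj_of_ne F G (ne_of_le_of_ne hm (leOfHom f) hy)) ≫
        G.map (homOfLE (leOfHom f)) ≫ eqToHom (descObj_of_ne F G hy).symm :=
  dif_neg hy

lemma descMap_of_le {x y : C} (f : x ⟶ y) (hy : y ≤ m) :
    descMap F G hFG hm f =
      eqToHom (descObj_of_le F G hFG ((leOfHom f).trans hy)) ≫
        F.map (homOfLE (leOfHom f)) ≫ eqToHom (descObj_of_le F G hFG hy).symm := by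
  by_cases hym : y = m
  · exact dif_pos hym
  · have hyl : y < m := lt_of_le_of_ne hy hym
    have hxl : x < m := lt_of_le_of_lt (leOfHom f) hyl
    have hmap : G.map (homOfLE (leOfHom f) : (⟨x, hxl.ne⟩ : {x : C // x ≠ m}) ⟶ ⟨y, hyl.ne⟩) =
        eqToHom (show G.obj ⟨x, hxl.ne⟩ = F.obj ⟨x, hxl.le⟩ from
          (Functor.congr_obj hFG ⟨x, hxl⟩).symm) ≫
          F.map (homOfLE (leOfHom f) : (⟨x, hxl.le⟩ : {x : C // x ≤ m}) ⟶ ⟨y, hyl.le⟩) ≫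
          eqToHom (show F.obj ⟨y, hyl.le⟩ = G.obj ⟨y, hyl.ne⟩ from
            Functor.congr_obj hFG ⟨y, hyl⟩) :=
      Functor.congr_hom hFG.symm (homOfLE (leOfHom f) : (⟨x, hxl⟩ : {x : C // x < m}) ⟶ ⟨y, hyl⟩)
    rw [descMap_of_ne F G hFG hm f hym, hmap]
    simp only [Category.assoc, eqToHom_trans, eqToHom_trans_assoc]

lemma descMap_id (x : C) : descMap F G hFG hm (𝟙 x) = 𝟙 (descObj F G x) := by
  by_cases hx : x = m
  · simp [descMap_of_le F G hFG hm _ hx.le, homOfLE_refl]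
  · simp [descMap_of_ne F G hFG hm _ hx, homOfLE_refl]

lemma descMap_comp {x y z : C} (f : x ⟶ y) (g : y ⟶ z) :
    descMap F G hFG hm (f ≫ g) = descMap F G hFG hm f ≫ descMap F G hFG hm g := by
  by_cases hz : z = m
  · have hy : y ≤ m := (leOfHom g).trans hz.le
    rw [descMap_of_le F G hFG hm _ hz.le, descMap_of_le F G hFG hm _ hy,
      descMap_of_le F G hFG hm _ hz.le]
    simp only [Category.assoc, eqToHom_trans_assoc, eqToHom_refl, Category.id_comp,
      ← F.map_comp_assoc]
    rfl
  · have hy : y ≠ m := ne_of_le_of_ne hm (leOfHom g) hz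
    rw [descMap_of_ne F G hFG hm _ hz, descMap_of_ne F G hFG hm _ hy,
      descMap_of_ne F G hFG hm _ hz]
    simp only [Category.assoc, eqToHom_trans_assoc, eqToHom_refl, Category.id_comp,
      ← G.map_comp_assoc]
    rfl

noncomputable def desc : C ⥤ D where
  obj := descObj F G
  map := descMap F G hFG hm
  map_id := descMap_id F G hFG hm
  map_comp := descMap_comp F G hFG hm

lemma leToAll_comp_desc : leToAll m ⋙ desc F G hFG hm = F :=
  CategoryTheory.Functor.ext (fun x => descObj_of_le F G hFG x.2)
    (fun _ y f => descMap_of_le F G hFG hm ((leToAll m).map f) y.2)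

lemma neToAll_comp_desc : neToAll m ⋙ desc F G hFG hm = G :=
  CategoryTheory.Functor.ext (fun x => descObj_of_ne F G x.2)
    (fun _ y f => descMap_of_ne F G hFG hm ((neToAll m).map f) y.2)

end PosetMaximalPushout

open PosetMaximalPushout in
theorem poset_maximal_pushout_in_Cat_general
    (C : Type) [PartialOrder C] (m : C) (hm : ∀ c : C, m ≤ c → c = m) :
    IsPushout (Z := Cat.of {x : C // x < m}) (X := Cat.of {x : C // x ≤ m})
      (Y := Cat.of {x : C // x ≠ m}) (P := Cat.of C)
      (ltToLe m).toCatHom (ltToNe m).toCatHom (leToAll m).toCatHom (neToAll m).toCatHom := by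
  have hFG (s : PushoutCocone (ltToLe m).toCatHom (ltToNe m).toCatHom) :
      ltToLe m ⋙ s.inl.toFunctor = ltToNe m ⋙ s.inr.toFunctor :=
    congrArg Cat.Hom.toFunctor s.condition
  refine ⟨⟨rfl⟩, ⟨PushoutCocone.IsColimit.mk _
    (fun s => (desc s.inl.toFunctor s.inr.toFunctor (hFG s) hm).toCatHom)
    (fun s => Cat.ext (leToAll_comp_desc _ _ (hFG s) hm))
    (fun s => Cat.ext (neToAll_comp_desc _ _ (hFG s) hm))
    (fun s K hl hr => Cat.ext (functor_ext hm ?_ ?_))⟩⟩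
  · exact (congrArg Cat.Hom.toFunctor hl).trans (leToAll_comp_desc _ _ (hFG s) hm).symm
  · exact (congrArg Cat.Hom.toFunctor hr).trans (neToAll_comp_desc _ _ (hFG s) hm).symm

/-- For a finite poset `C` with a maximal element `m`, the square of full
subposet inclusions with vertices `∂(C_{/m}) = {x | x < m}`, `C_{/m} = {x | x ≤ m}`,
`C' = C \ {m}`, and `C` is a pushout square in the category of small categories. -/
theorem poset_maximal_pushout_in_Cat
    (C : Type) [PartialOrder C] [Fintype C] (m : C) (hm : ∀ c : C, m ≤ c → c = m) :
    IsPushout (Z := Cat.of {x : C // x < m}) (X := Cat.of {x : C // x ≤ m})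
      (Y := Cat.of {x : C // x ≠ m}) (P := Cat.of C)
      (ltToLe m).toCatHom (ltToNe m).toCatHom (leToAll m).toCatHom (neToAll m).toCatHom :=
  poset_maximal_pushout_in_Cat_general C m hm
end

section
/- Let M be a model category, let x be a cofibrant object, and let Cyl^•(x) be a cylinder object for x (a cosimplicial object with Cyl^0(x) ≅ x, codegeneracies weak equivalences, and latching maps cofibrations for n ≥ 1). Then for any acyclic fibration y → z in M, the induced map of simplicial sets Hom_M(Cyl^•(x), y) → Hom_M(Cyl^•(x), z) is an acyclic fibration in the Kan–Quillen model structure. -/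
open CategoryTheory CategoryTheory.Limits

universe v u

/-- A class of morphisms is closed under retracts. -/
def RetractClosed {M : Type u} [Category.{v} M] (P : MorphismProperty M) : Prop :=
  ∀ ⦃a b c d : M⦄ (f : a ⟶ b) (g : c ⟶ d) (ia : a ⟶ c) (ra : c ⟶ a) (ib : b ⟶ d) (rb : d ⟶ b),
    ia ≫ ra = 𝟙 a → ib ≫ rb = 𝟙 b → ia ≫ g = f ≫ ib → ra ≫ f = g ≫ rb → P g → P f

/-- A (Quillen) model structure on a finitely bicomplete category `M`. -/
class ModelCategory (M : Type u) [Category.{v} M] [HasFiniteLimits M] [HasFiniteColimits M] :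
    Type (max u v) where
  W : MorphismProperty M
  Cof : MorphismProperty M
  Fib : MorphismProperty M
  w_id : ∀ x : M, W (𝟙 x)
  w_comp : ∀ {x y z : M} (f : x ⟶ y) (g : y ⟶ z), W f → W g → W (f ≫ g)
  w_cancel_left : ∀ {x y z : M} (f : x ⟶ y) (g : y ⟶ z), W f → W (f ≫ g) → W g
  w_cancel_right : ∀ {x y z : M} (f : x ⟶ y) (g : y ⟶ z), W g → W (f ≫ g) → W f
  w_retract : RetractClosed W
  cof_retract : RetractClosed Cof
  fib_retract : RetractClosed Fib
  lift_cof_triv : ∀ {a b x y : M} (i : a ⟶ b) (p : x ⟶ y),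
    Cof i → W i → Fib p → HasLiftingProperty i p
  lift_triv_fib : ∀ {a b x y : M} (i : a ⟶ b) (p : x ⟶ y),
    Cof i → Fib p → W p → HasLiftingProperty i p
  factor_cw_f : ∀ {x y : M} (f : x ⟶ y), ∃ (z : M) (i : x ⟶ z) (p : z ⟶ y),
    Cof i ∧ W i ∧ Fib p ∧ i ≫ p = f
  factor_c_wf : ∀ {x y : M} (f : x ⟶ y), ∃ (z : M) (i : x ⟶ z) (p : z ⟶ y),
    Cof i ∧ Fib p ∧ W p ∧ i ≫ p = f

namespace ModelCategory

variable {M : Type u} [Category.{v} M] [HasFiniteLimits M] [HasFiniteColimits M] [ModelCategory M]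

/-- An object is cofibrant if the map from the initial object is a cofibration. -/
def Cofibrant (x : M) : Prop := Cof (M := M) (initial.to x)

/-- An object is fibrant if the map to the terminal object is a fibration. -/
def Fibrant (x : M) : Prop := Fib (M := M) (terminal.from x)

end ModelCategory
variable {M : Type u} [Category.{v} M]

/-- The latching category of `Δ` at `[n]`: proper monomorphisms `[m] ↪ [n]`. -/
abbrev CosimplicialLatchingCat (n : ℕ) : Type :=
  ObjectProperty.FullSubcategory (fun f : Over (SimplexCategory.mk n) => Mono f.hom ∧ f.left.len < n)

/-- The latching diagram of a cosimplicial object at `[n]`. -/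
def cosimplicialLatchingDiagram (X : CosimplicialObject M) (n : ℕ) :
    CosimplicialLatchingCat n ⥤ M :=
  ObjectProperty.ι _ ⋙ Over.forget _ ⋙ X

/-- The canonical cocone on the latching diagram with apex `X.obj [n]`. -/
def cosimplicialLatchingCocone (X : CosimplicialObject M) (n : ℕ) :
    Cocone (cosimplicialLatchingDiagram X n) where
  pt := X.obj (SimplexCategory.mk n)
  ι :=
    { app := fun f => X.map f.obj.hom
      naturality := by
        intro f g u
        change X.map u.hom.left ≫ X.map g.obj.hom = X.map f.obj.hom ≫ 𝟙 _
        rw [← X.map_comp, Over.w u.hom, Category.comp_id] }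

/-- The latching map `Latch_n X → X^n` of a cosimplicial object. -/
noncomputable def cosimplicialLatchingMap (X : CosimplicialObject M) (n : ℕ)
    [HasColimit (cosimplicialLatchingDiagram X n)] :
    colimit (cosimplicialLatchingDiagram X n) ⟶ X.obj (SimplexCategory.mk n) :=
  colimit.desc _ (cosimplicialLatchingCocone X n)

open ModelCategory

/-- The simplicial set `[n] ↦ Hom_M(X^n, y)` of maps from a cosimplicial object to `y`. -/
def cosimplicialHomSSet {M : Type u} [Category.{v} M] (X : CosimplicialObject M) (y : M) :
    SSet.{v} :=
  X.op ⋙ yoneda.obj y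

/-- The map of simplicial sets `Hom_M(X^•, y) ⟶ Hom_M(X^•, z)` induced by `p : y ⟶ z`. -/
def cosimplicialHomSSetMap {M : Type u} [Category.{v} M] (X : CosimplicialObject M) {y z : M}
    (p : y ⟶ z) : cosimplicialHomSSet X y ⟶ cosimplicialHomSSet X z :=
  Functor.whiskerLeft X.op (yoneda.map p)

/-! A lifting problem of `∂Δ[n] ⟶ Δ[n]` against `Hom(X^•, y) ⟶ Hom(X^•, z)` is, by Yoneda, a
lifting problem of the latching map `Latch_n X ⟶ X^n` against `y ⟶ z`: every simplex of `∂Δ[n]`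
factors through its image, a proper face, so a map out of `∂Δ[n]` is a cocone on the latching
diagram. The latching maps are cofibrations (for `n = 0`, `Latch_0 X` is initial and `X^0 ≅ x` is
cofibrant), so the lifting axiom solves these problems. -/

open Simplicial Opposite

lemma SimplexCategory.len_image_lt_of_not_epi {D : SimplexCategory} {n : ℕ} (f : D ⟶ ⦋n⦌)
    (hf : ¬ Epi f) : (image f).len < n := by
  refine lt_of_le_of_ne (len_le_of_mono (image.ι f)) fun hlen => hf ?_
  have := (isIso_iff_of_mono (image.ι f)).mpr hlen
  rw [← image.fac f]
  infer_instance

namespace ModelCategory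

variable {M : Type u} [Category.{v} M] [HasFiniteLimits M] [HasFiniteColimits M] [ModelCategory M]

lemma Cofibrant.of_iso {x x' : M} (e : x ≅ x') (hx : Cofibrant x) : Cofibrant x' :=
  cof_retract _ _ (𝟙 _) (𝟙 _) e.inv e.hom (by simp) (by simp)
    (initial.hom_ext _ _) (initial.hom_ext _ _) hx

end ModelCategory

instance : IsEmpty (CosimplicialLatchingCat 0) := ⟨fun j => Nat.not_lt_zero _ j.property.2⟩

noncomputable def cosimplicialLatchingMapZeroArrowIso {M : Type u} [Category.{v} M] [HasInitial M]
    (X : CosimplicialObject M) [HasColimit (cosimplicialLatchingDiagram X 0)] :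
    Arrow.mk (initial.to (X.obj ⦋0⦌)) ≅ Arrow.mk (cosimplicialLatchingMap X 0) :=
  Arrow.isoMk
    (initialIsInitial.uniqueUpToIso
      (isColimitEquivIsInitialOfIsEmpty M _ (colimit.isColimit (cosimplicialLatchingDiagram X 0))))
    (Iso.refl _) (initialIsInitial.hom_ext _ _)

section

variable {M : Type u} [Category.{v} M] (X : CosimplicialObject M) {n : ℕ}

lemma ι_cosimplicialLatchingMap [HasColimit (cosimplicialLatchingDiagram X n)]
    (j : CosimplicialLatchingCat n) :
    colimit.ι (cosimplicialLatchingDiagram X n) j ≫ cosimplicialLatchingMap X n =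
      X.map j.obj.hom :=
  colimit.ι_desc _ _

def CosimplicialLatchingCat.boundarySimplex (j : CosimplicialLatchingCat n) :
    (SSet.boundary.{v} n).toSSet.obj (op j.obj.left) :=
  ⟨SSet.stdSimplex.objEquiv.symm j.obj.hom,
    SSet.boundary_obj_eq_univ j.obj.left.len n j.property.2 ▸ Set.mem_univ _⟩

def boundaryLatchingCocone {y : M} (F : (SSet.boundary.{v} n).toSSet ⟶ cosimplicialHomSSet X y) :
    Cocone (cosimplicialLatchingDiagram X n) where
  pt := y
  ι :=
    { app := fun j => F.app (op j.obj.left) j.boundarySimplex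
      naturality := fun j j' u => by
        have hnat := NatTrans.naturality_apply F u.hom.left.op j'.boundarySimplex
        have hsimplex : (SSet.boundary.{v} n).toSSet.map u.hom.left.op j'.boundarySimplex =
            j.boundarySimplex :=
          Subtype.ext (congrArg SSet.stdSimplex.objEquiv.symm (Over.w u.hom))
        rw [hsimplex] at hnat
        exact hnat.symm.trans (Category.comp_id _).symm }

lemma boundary_ι_comp_yonedaEquiv_symm {y : M}
    (F : (SSet.boundary.{v} n).toSSet ⟶ cosimplicialHomSSet X y) (l : X.obj ⦋n⦌ ⟶ y)
    (hl : ∀ j : CosimplicialLatchingCat n, X.map j.obj.hom ≫ l = F.app _ j.boundarySimplex) :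
    (SSet.boundary.{v} n).ι ≫ SSet.yonedaEquiv.symm l = F := by
  ext D ⟨α, hα⟩
  set f : D.unop ⟶ ⦋n⦌ := SSet.stdSimplex.objEquiv α
  have hf : ¬ Epi f := by rwa [SimplexCategory.epi_iff_surjective]
  let j : CosimplicialLatchingCat n :=
    ⟨Over.mk (image.ι f), inferInstanceAs (Mono (image.ι f)),
      SimplexCategory.len_image_lt_of_not_epi f hf⟩
  have hsimplex : (SSet.boundary.{v} n).toSSet.map (factorThruImage f).op j.boundarySimplex =
      ⟨α, hα⟩ :=
    Subtype.ext (congrArg SSet.stdSimplex.objEquiv.symm (image.fac f))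
  change X.map f ≫ l = _
  have hnat := NatTrans.naturality_apply F (factorThruImage f).op j.boundarySimplex
  rw [hsimplex] at hnat
  have hfac : factorThruImage f ≫ j.obj.hom = f := image.fac f
  rw [← hfac, X.map_comp, Category.assoc, hl j]
  exact hnat.symm

theorem hasLiftingProperty_boundary_ι_cosimplicialHomSSetMap {y z : M} (p : y ⟶ z)
    [HasColimit (cosimplicialLatchingDiagram X n)]
    [HasLiftingProperty (cosimplicialLatchingMap X n) p] :
    HasLiftingProperty (SSet.boundary.{v} n).ι (cosimplicialHomSSetMap X p) where
  sq_hasLift {F G} sq := by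
    obtain ⟨g, rfl⟩ : ∃ g : X.obj ⦋n⦌ ⟶ z, SSet.yonedaEquiv.symm g = G :=
      SSet.yonedaEquiv.symm.surjective G
    let ℓ : colimit (cosimplicialLatchingDiagram X n) ⟶ y :=
      colimit.desc _ (boundaryLatchingCocone X F)
    have hℓ (j : CosimplicialLatchingCat n) :
        colimit.ι _ j ≫ ℓ = F.app (op j.obj.left) j.boundarySimplex :=
      colimit.ι_desc _ _
    have sq' : CommSq ℓ (cosimplicialLatchingMap X n) p g := ⟨colimit.hom_ext fun j => by
      rw [reassoc_of% (hℓ j)]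
      exact (ConcreteCategory.congr_hom (congr_app sq.w (op j.obj.left)) j.boundarySimplex).trans
        ((reassoc_of% (ι_cosimplicialLatchingMap X j)) g).symm⟩
    refine ⟨⟨⟨SSet.yonedaEquiv.symm sq'.lift, ?_, ?_⟩⟩⟩
    · refine boundary_ι_comp_yonedaEquiv_symm X F _ fun j => ?_
      refine ((reassoc_of% (ι_cosimplicialLatchingMap X j)) _).symm.trans ?_
      rw [sq'.fac_left, hℓ]
    · exact (SSet.yonedaEquiv_symm_comp _ _).trans (congrArg SSet.yonedaEquiv.symm sq'.fac_right)

end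

/-- If `x` is cofibrant and `Cyl^•(x)` is a cylinder object for `x`, then for
any acyclic fibration `y → z` the induced map `Hom_M(Cyl^•(x), y) → Hom_M(Cyl^•(x), z)` is an
acyclic fibration of simplicial sets, i.e. it has the right lifting property against all
boundary inclusions `∂Δⁿ → Δⁿ`. -/
theorem cylinder_homSSet_acyclic_fibration
    {M : Type u} [Category.{v} M] [HasFiniteLimits M] [HasFiniteColimits M] [ModelCategory M]
    (x : M) (hx : Cofibrant x) (X : CosimplicialObject M)
    [∀ k : ℕ, HasColimit (cosimplicialLatchingDiagram X k)]
    (e : X.obj (SimplexCategory.mk 0) ≅ x)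
    (hw : ∀ (n : ℕ) (i : Fin (n + 1)), W (M := M) (X.σ i))
    (hlatch : ∀ n : ℕ, 1 ≤ n → Cof (M := M) (cosimplicialLatchingMap X n))
    {y z : M} (p : y ⟶ z) (hpf : Fib (M := M) p) (hpw : W (M := M) p) :
    ∀ n : ℕ, HasLiftingProperty (SSet.boundary.{v} n).ι (cosimplicialHomSSetMap X p) := by
  intro n
  have : HasLiftingProperty (cosimplicialLatchingMap X n) p := by
    rcases n.eq_zero_or_pos with rfl | hn
    · have := lift_triv_fib _ p (hx.of_iso e.symm) hpf hpw
      exact .of_arrow_iso_left (cosimplicialLatchingMapZeroArrowIso X) p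
    · exact lift_triv_fib _ p (hlatch n hn) hpf hpw
  exact hasLiftingProperty_boundary_ι_cosimplicialHomSSetMap X p
end

section
/- Let M be a model category, x cofibrant and y fibrant. Then left homotopy (via any cylinder object for x) and right homotopy (via any path object for y) of maps x → y coincide, and the canonical map Hom_M(x,y)/∼ → Hom_{Ho(M)}(x,y) from homotopy classes of maps to morphisms in the homotopy category is a bijection. -/
open CategoryTheory CategoryTheory.Limits

universe v u

open ModelCategory

/-- Left homotopy with respect to a cylinder `x ⊔ x —j→ Cl`. -/
def LeftHomotopic {M : Type u} [Category.{v} M] [HasFiniteLimits M] [HasFiniteColimits M]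
    {x y Cl : M} (j : x ⨿ x ⟶ Cl) (f g : x ⟶ y) : Prop :=
  ∃ H : Cl ⟶ y, coprod.inl ≫ j ≫ H = f ∧ coprod.inr ≫ j ≫ H = g

/-- Right homotopy with respect to a path object `Pa —pr→ y × y`. -/
def RightHomotopic {M : Type u} [Category.{v} M] [HasFiniteLimits M] [HasFiniteColimits M]
    {x y Pa : M} (pr : Pa ⟶ y ⨯ y) (f g : x ⟶ y) : Prop :=
  ∃ K : x ⟶ Pa, K ≫ pr ≫ prod.fst = f ∧ K ≫ pr ≫ prod.snd = g

/-!
The axioms of `ModelCategory` are Quillen's, so they make `M` a model category in the sense of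
`HomotopicalAlgebra.ModelCategory`, and the theorem becomes the fundamental lemma of homotopical
algebra once `j, q` are read as a good cylinder for `x` and `s, pr` as a good path object for `y`.
For `x` cofibrant and `y` fibrant, a homotopy through one cylinder lifts against the fibration `pr`
to a right homotopy through the given path object, and dually a right homotopy lifts along the
cofibration `j`. The hom-set `Ho(M)(x, y)` is the set of homotopy classes because the quotient of
the bifibrant objects by homotopy is already a localization at the weak equivalences.
-/

theorem RetractClosed.isStableUnderRetracts {M : Type u} [Category.{v} M]
    {P : MorphismProperty M} (hP : RetractClosed P) : P.IsStableUnderRetracts where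
  of_retract h hg := hP _ _ h.i.left h.r.left h.i.right h.r.right (by simp) (by simp) h.i.w h.r.w hg

open HomotopicalAlgebra hiding ModelCategory

namespace ModelCategory

variable {M : Type u} [Category.{v} M] [HasFiniteLimits M] [HasFiniteColimits M] [ModelCategory M]

instance : CategoryWithWeakEquivalences M := ⟨W⟩

instance : CategoryWithCofibrations M := ⟨Cof⟩

instance : CategoryWithFibrations M := ⟨Fib⟩

instance : (weakEquivalences M).HasTwoOutOfThreeProperty where
  comp_mem := w_comp
  of_postcomp := w_cancel_right
  of_precomp := w_cancel_left

-- Left to their defaults, the three structures would not let `Cofibration i` unfold to `Cof i`.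
instance : HomotopicalAlgebra.ModelCategory M where
  categoryWithFibrations := inferInstance
  categoryWithCofibrations := inferInstance
  categoryWithWeakEquivalences := inferInstance
  cm3a := w_retract.isStableUnderRetracts
  cm3b := fib_retract.isStableUnderRetracts
  cm3c := cof_retract.isStableUnderRetracts
  cm4a i p hi hiw hp := lift_cof_triv i p hi.mem hiw.mem hp.mem
  cm4b i p hi hp hpw := lift_triv_fib i p hi.mem hp.mem hpw.mem
  cm5a := ⟨fun f => by
    obtain ⟨z, i, p, hi, hiw, hp, fac⟩ := factor_cw_f f
    exact ⟨⟨z, i, p, fac, ⟨hi, hiw⟩, hp⟩⟩⟩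
  cm5b := ⟨fun f => by
    obtain ⟨z, i, p, hi, hp, hpw, fac⟩ := factor_c_wf f
    exact ⟨⟨z, i, p, fac, hi, ⟨hp, hpw⟩⟩⟩⟩

instance : (W (M := M)).Q.IsLocalization (weakEquivalences M) := Functor.q_isLocalization _

section Cylinder

variable {x y Cl : M} {j : x ⨿ x ⟶ Cl} {q : Cl ⟶ x}

noncomputable def cylinderOfFactorization (hq : W q)
    (hfold : j ≫ q = coprod.desc (𝟙 x) (𝟙 x)) : Cylinder x where
  I := Cl
  i₀ := coprod.inl ≫ j
  i₁ := coprod.inr ≫ j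
  π := q
  i₀_π := by simp [hfold, coprod.inl_desc]
  i₁_π := by simp [hfold, coprod.inr_desc]
  weakEquivalence_π := ⟨hq⟩

lemma cylinderOfFactorization_i (hq : W q) (hfold : j ≫ q = coprod.desc (𝟙 x) (𝟙 x)) :
    (cylinderOfFactorization hq hfold).i = j := by
  ext <;> simp [cylinderOfFactorization]

lemma cylinderOfFactorization_isGood (hj : Cof j) (hq : W q)
    (hfold : j ≫ q = coprod.desc (𝟙 x) (𝟙 x)) : (cylinderOfFactorization hq hfold).IsGood :=
  ⟨⟨by rw [cylinderOfFactorization_i]; exact hj⟩⟩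

lemma leftHomotopic_iff_nonempty_leftHomotopy (hq : W q)
    (hfold : j ≫ q = coprod.desc (𝟙 x) (𝟙 x)) {f g : x ⟶ y} :
    LeftHomotopic j f g ↔ Nonempty ((cylinderOfFactorization hq hfold).LeftHomotopy f g) :=
  ⟨fun ⟨H, h₀, h₁⟩ => ⟨⟨H, (Category.assoc _ _ _).trans h₀, (Category.assoc _ _ _).trans h₁⟩⟩,
    fun ⟨H⟩ => ⟨H.h, (Category.assoc _ _ _).symm.trans H.h₀,
      (Category.assoc _ _ _).symm.trans H.h₁⟩⟩

lemma leftHomotopic_iff_leftHomotopyRel (hx : Cofibrant x) (hy : Fibrant y) (hj : Cof j)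
    (hq : W q) (hfold : j ≫ q = coprod.desc (𝟙 x) (𝟙 x)) {f g : x ⟶ y} :
    LeftHomotopic j f g ↔ LeftHomotopyRel f g := by
  have : IsCofibrant x := ⟨hx⟩
  have : IsFibrant y := ⟨hy⟩
  have := cylinderOfFactorization_isGood hj hq hfold
  rw [leftHomotopic_iff_nonempty_leftHomotopy hq hfold]
  exact ⟨fun ⟨H⟩ => H.leftHomotopyRel, fun h => ⟨h.leftHomotopy _⟩⟩

end Cylinder

section PathObject

variable {x y Pa : M} {s : y ⟶ Pa} {pr : Pa ⟶ y ⨯ y}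

noncomputable def pathObjectOfFactorization (hs : W s)
    (hdiag : s ≫ pr = prod.lift (𝟙 y) (𝟙 y)) : PathObject y where
  P := Pa
  p₀ := pr ≫ prod.fst
  p₁ := pr ≫ prod.snd
  ι := s
  ι_p₀ := by simp [reassoc_of% hdiag, prod.lift_fst]
  ι_p₁ := by simp [reassoc_of% hdiag, prod.lift_snd]
  weakEquivalence_ι := ⟨hs⟩

lemma pathObjectOfFactorization_p (hs : W s) (hdiag : s ≫ pr = prod.lift (𝟙 y) (𝟙 y)) :
    (pathObjectOfFactorization hs hdiag).p = pr := by
  ext <;> simp [pathObjectOfFactorization]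

lemma pathObjectOfFactorization_isGood (hs : W s) (hpr : Fib pr)
    (hdiag : s ≫ pr = prod.lift (𝟙 y) (𝟙 y)) : (pathObjectOfFactorization hs hdiag).IsGood :=
  ⟨⟨by rw [pathObjectOfFactorization_p]; exact hpr⟩⟩

lemma rightHomotopic_iff_nonempty_rightHomotopy (hs : W s)
    (hdiag : s ≫ pr = prod.lift (𝟙 y) (𝟙 y)) {f g : x ⟶ y} :
    RightHomotopic pr f g ↔ Nonempty ((pathObjectOfFactorization hs hdiag).RightHomotopy f g) :=
  ⟨fun ⟨K, h₀, h₁⟩ => ⟨⟨K, h₀, h₁⟩⟩, fun ⟨K⟩ => ⟨K.h, K.h₀, K.h₁⟩⟩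

lemma rightHomotopic_iff_rightHomotopyRel (hx : Cofibrant x) (hy : Fibrant y) (hs : W s)
    (hpr : Fib pr) (hdiag : s ≫ pr = prod.lift (𝟙 y) (𝟙 y)) {f g : x ⟶ y} :
    RightHomotopic pr f g ↔ RightHomotopyRel f g := by
  have : IsCofibrant x := ⟨hx⟩
  have : IsFibrant y := ⟨hy⟩
  have := pathObjectOfFactorization_isGood hs hpr hdiag
  rw [rightHomotopic_iff_nonempty_rightHomotopy hs hdiag]
  exact ⟨fun ⟨K⟩ => K.rightHomotopyRel, fun h => ⟨h.rightHomotopy _⟩⟩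

end PathObject

end ModelCategory

/-- the classical fundamental theorem of model categories.  For `x` cofibrant
and `y` fibrant, left homotopy (via any cylinder object) and right homotopy (via any path
object) of maps `x ⟶ y` coincide, and the canonical map from homotopy classes of maps to
morphisms `x ⟶ y` in the homotopy category `Ho(M) = M[W⁻¹]` is a bijection: the functor
`M ⥤ Ho(M)` is surjective on these hom-sets, and identifies two maps iff they are homotopic. -/
theorem fundamental_theorem_of_model_categories
    {M : Type u} [Category.{v} M] [HasFiniteLimits M] [HasFiniteColimits M] [ModelCategory M]
    (x y : M) (hx : Cofibrant x) (hy : Fibrant y)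
    (Cl : M) (j : x ⨿ x ⟶ Cl) (q : Cl ⟶ x)
    (hj : Cof (M := M) j) (hq : W (M := M) q) (hfold : j ≫ q = coprod.desc (𝟙 x) (𝟙 x))
    (Pa : M) (s : y ⟶ Pa) (pr : Pa ⟶ y ⨯ y)
    (hs : W (M := M) s) (hpr : Fib (M := M) pr) (hdiag : s ≫ pr = prod.lift (𝟙 y) (𝟙 y)) :
    (∀ f g : x ⟶ y, LeftHomotopic j f g ↔ RightHomotopic pr f g) ∧
    Function.Surjective (fun f : x ⟶ y => (W (M := M)).Q.map f) ∧
    (∀ f g : x ⟶ y, (W (M := M)).Q.map f = (W (M := M)).Q.map g ↔ LeftHomotopic j f g) := by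
  have : IsCofibrant x := ⟨hx⟩
  have : IsFibrant y := ⟨hy⟩
  have hleft (f g : x ⟶ y) : LeftHomotopic j f g ↔ LeftHomotopyRel f g :=
    leftHomotopic_iff_leftHomotopyRel hx hy hj hq hfold
  have hright (f g : x ⟶ y) : RightHomotopic pr f g ↔ RightHomotopyRel f g :=
    rightHomotopic_iff_rightHomotopyRel hx hy hs hpr hdiag
  refine ⟨fun f g => ?_, map_surjective_of_isLocalization W.Q x y, fun f g => ?_⟩
  · rw [hleft, hright, leftHomotopyRel_iff_rightHomotopyRel]
  · rw [hleft, LeftHomotopyRel.iff_map_eq W.Q]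
end
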